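/- arXiv:2307.13480 — 6 statements merged into one kernel-verified Lean document; each statement's English description precedes it below -/
import Mathlib

section
/- Let ρ_BTN be a basic triangle network state with local observables {A_m} for Alice and {B_n} for Bob. Then the off-diagonal block γ_E of the covariance matrix Γ({A_m, B_n, C_k}, ρ_BTN), with entries [γ_E]_{mn} = tr((A_m ⊗ B_n) ρ_BTN) − tr(A_m ρ_BTN)·tr(B_n ρ_BTN), satisfies [γ_E]_{mn} = tr((A_m^(2) ⊗ B_n^(1)) ρ_c) − tr(A_m^(2) ρ_c^{(A₂)})·tr(B_n^(1) ρ_c^{(B₁)}), i.e. γ_E is determined by the reduced observables and the single source state ρ_c on A₂B₁ alone. -/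
open Matrix Kronecker BigOperators
open scoped ComplexOrder

noncomputable section

/-- Covariance matrix of a family of observables `M` in the state `ρ`. -/
def covMat {n ι : Type*} [Fintype n] (M : ι → Matrix n n ℂ) (ρ : Matrix n n ℂ) :
    Matrix ι ι ℂ :=
  Matrix.of fun i j => (M i * M j * ρ).trace - (M i * ρ).trace * (M j * ρ).trace

/-- A density matrix: positive semidefinite with unit trace. -/
def IsDensity {n : Type*} [Fintype n] (ρ : Matrix n n ℂ) : Prop :=
  ρ.PosSemidef ∧ ρ.trace = 1

/-- Partial trace over the first tensor factor. -/
def ptrace₁ {m n : Type*} [Fintype m] (M : Matrix (m × n) (m × n) ℂ) : Matrix n n ℂ :=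
  Matrix.of fun i j => ∑ k, M (k, i) (k, j)

/-- Partial trace over the second tensor factor. -/
def ptrace₂ {m n : Type*} [Fintype n] (M : Matrix (m × n) (m × n) ℂ) : Matrix m m ℂ :=
  Matrix.of fun i j => ∑ k, M (i, k) (j, k)

/-- Index of a two-qudit space. -/
abbrev D2 (d : ℕ) := Fin d × Fin d

/-- Index of the six-factor triangle-network space, ordered C₂, A₁, A₂, B₁, B₂, C₁. -/
abbrev TriIdx (d : ℕ) := D2 d × (D2 d × D2 d)

/-- The basic triangle network state `ρ_b ⊗ ρ_c ⊗ ρ_a`. -/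
def btnState {d : ℕ} (ρa ρb ρc : Matrix (D2 d) (D2 d) ℂ) :
    Matrix (TriIdx d) (TriIdx d) ℂ :=
  ρb ⊗ₖ (ρc ⊗ₖ ρa)

/-- Embed an observable of Alice (acting on A₁A₂) into the global space. -/
def embedA {d : ℕ} (M : Matrix (D2 d) (D2 d) ℂ) : Matrix (TriIdx d) (TriIdx d) ℂ :=
  Matrix.of fun p q =>
    if p.1.1 = q.1.1 ∧ p.2.1.2 = q.2.1.2 ∧ p.2.2 = q.2.2
    then M (p.1.2, p.2.1.1) (q.1.2, q.2.1.1) else 0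

/-- Embed an observable of Bob (acting on B₁B₂) into the global space. -/
def embedB {d : ℕ} (M : Matrix (D2 d) (D2 d) ℂ) : Matrix (TriIdx d) (TriIdx d) ℂ :=
  Matrix.of fun p q =>
    if p.1 = q.1 ∧ p.2.1.1 = q.2.1.1 ∧ p.2.2.2 = q.2.2.2
    then M (p.2.1.2, p.2.2.1) (q.2.1.2, q.2.2.1) else 0

/-- Embed an observable of Charlie (acting on C₁C₂) into the global space. -/
def embedC {d : ℕ} (M : Matrix (D2 d) (D2 d) ℂ) : Matrix (TriIdx d) (TriIdx d) ℂ :=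
  Matrix.of fun p q =>
    if p.1.2 = q.1.2 ∧ p.2.1 = q.2.1 ∧ p.2.2.1 = q.2.2.1
    then M (p.2.2.2, p.1.1) (q.2.2.2, q.1.1) else 0

section marginals
variable {d : ℕ} (ρa ρb ρc : Matrix (D2 d) (D2 d) ℂ)

/-- Marginal of ρ_BTN on A₁ (second factor of ρ_b = ρ^{C₂A₁}). -/
def margA1 : Matrix (Fin d) (Fin d) ℂ := ptrace₁ ρb
/-- Marginal on C₂. -/
def margC2 : Matrix (Fin d) (Fin d) ℂ := ptrace₂ ρb
/-- Marginal on A₂ (first factor of ρ_c = ρ^{A₂B₁}). -/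
def margA2 : Matrix (Fin d) (Fin d) ℂ := ptrace₂ ρc
/-- Marginal on B₁. -/
def margB1 : Matrix (Fin d) (Fin d) ℂ := ptrace₁ ρc
/-- Marginal on B₂ (first factor of ρ_a = ρ^{B₂C₁}). -/
def margB2 : Matrix (Fin d) (Fin d) ℂ := ptrace₂ ρa
/-- Marginal on C₁. -/
def margC1 : Matrix (Fin d) (Fin d) ℂ := ptrace₁ ρa

/-- Reduced observable A^(2) = tr_{A₁}(A (ρ^{A₁} ⊗ 1)). -/
def redA2 (M : Matrix (D2 d) (D2 d) ℂ) : Matrix (Fin d) (Fin d) ℂ :=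
  ptrace₁ (M * (margA1 ρb ⊗ₖ (1 : Matrix (Fin d) (Fin d) ℂ)))
/-- Reduced observable A^(1) = tr_{A₂}(A (1 ⊗ ρ^{A₂})). -/
def redA1 (M : Matrix (D2 d) (D2 d) ℂ) : Matrix (Fin d) (Fin d) ℂ :=
  ptrace₂ (M * ((1 : Matrix (Fin d) (Fin d) ℂ) ⊗ₖ margA2 ρc))
/-- Reduced observable B^(1) = tr_{B₂}(B (1 ⊗ ρ^{B₂})). -/
def redB1 (M : Matrix (D2 d) (D2 d) ℂ) : Matrix (Fin d) (Fin d) ℂ :=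
  ptrace₂ (M * ((1 : Matrix (Fin d) (Fin d) ℂ) ⊗ₖ margB2 ρa))
/-- Reduced observable B^(2) = tr_{B₁}(B (ρ^{B₁} ⊗ 1)). -/
def redB2 (M : Matrix (D2 d) (D2 d) ℂ) : Matrix (Fin d) (Fin d) ℂ :=
  ptrace₁ (M * (margB1 ρc ⊗ₖ (1 : Matrix (Fin d) (Fin d) ℂ)))
/-- Reduced observable C^(1) = tr_{C₂}(C (1 ⊗ ρ^{C₂})); here C acts on C₁C₂. -/
def redC1 (M : Matrix (D2 d) (D2 d) ℂ) : Matrix (Fin d) (Fin d) ℂ :=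
  ptrace₂ (M * ((1 : Matrix (Fin d) (Fin d) ℂ) ⊗ₖ margC2 ρb))
/-- Reduced observable C^(2) = tr_{C₁}(C (ρ^{C₁} ⊗ 1)). -/
def redC2 (M : Matrix (D2 d) (D2 d) ℂ) : Matrix (Fin d) (Fin d) ℂ :=
  ptrace₁ (M * (margC1 ρa ⊗ₖ (1 : Matrix (Fin d) (Fin d) ℂ)))

end marginals


section aux
set_option maxHeartbeats 4000000

abbrev V8' (d : ℕ) := Fin d × Fin d × Fin d × Fin d × Fin d × Fin d × Fin d × Fin d
abbrev V10' (d : ℕ) :=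
  Fin d × Fin d × Fin d × Fin d × Fin d × Fin d × Fin d × Fin d × Fin d × Fin d

variable {d : ℕ} (ρa ρb ρc : Matrix (D2 d) (D2 d) ℂ) (M N : Matrix (D2 d) (D2 d) ℂ)

def e1 {d : ℕ} : V8' d ≃ V8' d where
  toFun := fun (a,b,c,e,f,g,h,i) => (f,g,c,i,e,b,h,a)
  invFun := fun (a,b,c,e,f,g,h,i) => (i,g,c,f,a,b,h,e)
  left_inv := fun ⟨_,_,_,_,_,_,_,_⟩ => rfl
  right_inv := fun ⟨_,_,_,_,_,_,_,_⟩ => rfl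

lemma keyA : (embedA M * btnState ρa ρb ρc).trace
    = (redA2 ρb M * margA2 ρc).trace * ρa.trace := by
  have hL : (embedA M * btnState ρa ρb ρc).trace
      = ∑ v : V8' d, (fun (x, x1, x2, x3, x4, x5, x6, x7) =>
          M (x1, x2) (x6, x7) *
            (ρb (x, x6) (x, x1) * (ρc (x7, x3) (x2, x3) * ρa (x4, x5) (x4, x5)))) v := by
    simp (maxSteps := 10000000) only [Matrix.trace, Matrix.diag, Matrix.mul_apply, embedA,
      btnState, ptrace₁, ptrace₂, Matrix.kroneckerMap_apply, Matrix.of_apply,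
      Fintype.sum_prod_type, ite_mul, zero_mul, mul_ite, mul_zero,
      Finset.sum_ite_eq, Finset.sum_ite_eq', Finset.mem_univ, if_true, Matrix.one_apply,
      ite_and, Prod.mk.injEq, Finset.sum_ite_irrel, Finset.sum_const_zero, mul_one, one_mul]
  have hR : (redA2 ρb M * margA2 ρc).trace * ρa.trace
      = ∑ v : V8' d, (fun (x, x1, x2, x3, x4, x5, x6, i) =>
          M (x5, x2) (x6, x3) * ρb (i, x6) (i, x5) * ρc (x3, x4) (x2, x4) *
            ρa (x, x1) (x, x1)) v := by
    simp (maxSteps := 10000000) only [Matrix.trace, Matrix.diag, Matrix.mul_apply, redA2,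
      margA2, margA1, ptrace₁, ptrace₂, Matrix.kroneckerMap_apply, Matrix.of_apply,
      Fintype.sum_prod_type, ite_mul, zero_mul, mul_ite, mul_zero,
      Finset.sum_ite_eq, Finset.sum_ite_eq', Finset.mem_univ, if_true, Matrix.one_apply,
      ite_and, Prod.mk.injEq, Finset.sum_ite_irrel, Finset.sum_const_zero,
      Finset.sum_mul, Finset.mul_sum, mul_one, one_mul]
  rw [hL, hR]
  exact Fintype.sum_equiv e1 _ _ (fun ⟨a,b,c,e,f,g,h,i⟩ => by simp [e1]; ring)

def e2 {d : ℕ} : V8' d ≃ V8' d where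
  toFun := fun (a,b,c,e,f,g,h,i) => (a,b,e,h,c,f,i,g)
  invFun := fun (a,b,c,e,f,g,h,i) => (a,b,f,c,g,i,e,h)
  left_inv := fun ⟨_,_,_,_,_,_,_,_⟩ => rfl
  right_inv := fun ⟨_,_,_,_,_,_,_,_⟩ => rfl

lemma keyB : (embedB N * btnState ρa ρb ρc).trace
    = (redB1 ρa N * margB1 ρc).trace * ρb.trace := by
  have hL : (embedB N * btnState ρa ρb ρc).trace
      = ∑ v : V8' d, (fun (x, y, x1, x2, x3, x4, x5, x6) =>
          N (x2, x3) (x5, x6) *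
            (ρb (x, y) (x, y) * (ρc (x1, x5) (x1, x2) * ρa (x6, x4) (x3, x4)))) v := by
    simp (maxSteps := 10000000) only [Matrix.trace, Matrix.diag, Matrix.mul_apply, embedB,
      btnState, ptrace₁, ptrace₂, Matrix.kroneckerMap_apply, Matrix.of_apply,
      Fintype.sum_prod_type, ite_mul, zero_mul, mul_ite, mul_zero,
      Finset.sum_ite_eq, Finset.sum_ite_eq', Finset.mem_univ, if_true, Matrix.one_apply,
      ite_and, Prod.mk.injEq, Finset.sum_ite_irrel, Finset.sum_const_zero, mul_one, one_mul]
  have hR : (redB1 ρa N * margB1 ρc).trace * ρb.trace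
      = ∑ v : V8' d, (fun (x, x1, x2, x3, x4, x5, x6, i) =>
          N (x2, x5) (x3, x6) * ρa (x6, i) (x5, i) * ρc (x4, x3) (x4, x2) *
            ρb (x, x1) (x, x1)) v := by
    simp (maxSteps := 10000000) only [Matrix.trace, Matrix.diag, Matrix.mul_apply, redB1,
      margB1, margB2, ptrace₁, ptrace₂, Matrix.kroneckerMap_apply, Matrix.of_apply,
      Fintype.sum_prod_type, ite_mul, zero_mul, mul_ite, mul_zero,
      Finset.sum_ite_eq, Finset.sum_ite_eq', Finset.mem_univ, if_true, Matrix.one_apply,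
      ite_and, Prod.mk.injEq, Finset.sum_ite_irrel, Finset.sum_const_zero,
      Finset.sum_mul, Finset.mul_sum, mul_one, one_mul]
  rw [hL, hR]
  exact Fintype.sum_equiv e2 _ _ (fun ⟨a,b,c,e,f,g,h,i⟩ => by simp [e2]; ring)

def e3 {d : ℕ} : V10' d ≃ V10' d where
  toFun := fun (a,b,c,e,f,g,h,i,j,k) => (c,e,i,j,f,k,g,b,h,a)
  invFun := fun (a,b,c,e,f,g,h,i,j,k) => (k,i,a,b,f,h,j,c,e,g)
  left_inv := fun ⟨_,_,_,_,_,_,_,_,_,_⟩ => rfl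
  right_inv := fun ⟨_,_,_,_,_,_,_,_,_,_⟩ => rfl

lemma keyAB : (embedA M * embedB N * btnState ρa ρb ρc).trace
    = ((redA2 ρb M ⊗ₖ redB1 ρa N) * ρc).trace := by
  have hL : (embedA M * embedB N * btnState ρa ρb ρc).trace
      = ∑ v : V10' d, (fun (x, x1, x2, x3, x4, x5, x6, x7, x8, x9) =>
          M (x1, x2) (x6, x7) * N (x3, x4) (x8, x9) *
            (ρb (x, x6) (x, x1) * (ρc (x7, x8) (x2, x3) * ρa (x9, x5) (x4, x5)))) v := by
    simp (maxSteps := 10000000) only [Matrix.trace, Matrix.diag, Matrix.mul_apply, embedA,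
      embedB, btnState, ptrace₁, ptrace₂, Matrix.kroneckerMap_apply, Matrix.of_apply,
      Fintype.sum_prod_type, ite_mul, zero_mul, mul_ite, mul_zero,
      Finset.sum_ite_eq, Finset.sum_ite_eq', Finset.mem_univ, if_true, Matrix.one_apply,
      ite_and, Prod.mk.injEq, Finset.sum_ite_irrel, Finset.sum_const_zero, mul_one, one_mul]
  have hR : ((redA2 ρb M ⊗ₖ redB1 ρa N) * ρc).trace
      = ∑ v : V10' d, (fun (x, x1, x2, x3, x4, x5, x6, x7, x8, x9) =>
          M (x7, x) (x8, x2) * ρb (x9, x8) (x9, x7) *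
              (N (x1, x4) (x3, x5) * ρa (x5, x6) (x4, x6)) *
            ρc (x2, x3) (x, x1)) v := by
    simp (maxSteps := 10000000) only [Matrix.trace, Matrix.diag, Matrix.mul_apply, redA2,
      redB1, margA1, margB2, ptrace₁, ptrace₂, Matrix.kroneckerMap_apply, Matrix.of_apply,
      Fintype.sum_prod_type, ite_mul, zero_mul, mul_ite, mul_zero,
      Finset.sum_ite_eq, Finset.sum_ite_eq', Finset.mem_univ, if_true, Matrix.one_apply,
      ite_and, Prod.mk.injEq, Finset.sum_ite_irrel, Finset.sum_const_zero,
      Finset.sum_mul, Finset.mul_sum, mul_one, one_mul]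
  rw [hL, hR]
  exact Fintype.sum_equiv e3 _ _ (fun ⟨a,b,c,e,f,g,h,i,j,k⟩ => by simp [e3]; ring)

end aux
/-- The off-diagonal Alice–Bob block `γ_E` of the covariance
matrix of a BTN state is determined by the reduced observables `A^(2)`, `B^(1)`
and the single source state `ρ_c` on A₂B₁ alone. -/
theorem stmt1 {d kA kB : ℕ} (hd : 1 ≤ d)
    (ρa ρb ρc : Matrix (D2 d) (D2 d) ℂ)
    (hρa : IsDensity ρa) (hρb : IsDensity ρb) (hρc : IsDensity ρc)
    (A : Fin kA → Matrix (D2 d) (D2 d) ℂ) (hA : ∀ m, (A m).IsHermitian)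
    (B : Fin kB → Matrix (D2 d) (D2 d) ℂ) (hB : ∀ n, (B n).IsHermitian) :
    ∀ (m : Fin kA) (n : Fin kB),
      -- [γ_E]_{mn}, the (m,n) entry of the Alice–Bob off-diagonal block
      (embedA (A m) * embedB (B n) * btnState ρa ρb ρc).trace -
          (embedA (A m) * btnState ρa ρb ρc).trace *
            (embedB (B n) * btnState ρa ρb ρc).trace =
        ((redA2 ρb (A m) ⊗ₖ redB1 ρa (B n)) * ρc).trace -
          (redA2 ρb (A m) * margA2 ρc).trace *
            (redB1 ρa (B n) * margB1 ρc).trace := by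
  intro m n
  rw [keyA ρa ρb ρc (A m), keyB ρa ρb ρc (B n), keyAB ρa ρb ρc (A m) (B n),
    hρa.2, hρb.2, mul_one, mul_one]
end
end

section
/- Let ρ₁ and ρ₂ be density matrices on C^{d₁} and C^{d₂} respectively, and let {M_i} be a finite family of Hermitian matrices on C^{d₁} ⊗ C^{d₂}. Define the reduced observables M_i^(1) = tr₂(M_i (1_{d₁} ⊗ ρ₂)) on C^{d₁} and M_i^(2) = tr₁(M_i (ρ₁ ⊗ 1_{d₂})) on C^{d₂}, where tr₁ and tr₂ are the partial traces over the first and second factor. Then the matrix Γ({M_i}, ρ₁ ⊗ ρ₂) − Γ({M_i^(1)}, ρ₁) − Γ({M_i^(2)}, ρ₂) is positive semidefinite. -/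
open Matrix Kronecker BigOperators
open scoped ComplexOrder

noncomputable section

/- ### Auxiliary lemmas -/

lemma kron_conjTranspose {m n : Type*} (A : Matrix m m ℂ) (B : Matrix n n ℂ) :
    (A ⊗ₖ B)ᴴ = Aᴴ ⊗ₖ Bᴴ := by
  ext ⟨i,k⟩ ⟨j,l⟩
  simp [conjTranspose_apply, kroneckerMap_apply]

lemma trace_CT_mul_self_nonneg {n : Type*} [Fintype n] (A : Matrix n n ℂ) :
    0 ≤ (Aᴴ * A).trace := by
  rw [Matrix.trace]
  refine Finset.sum_nonneg fun i _ => ?_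
  rw [Matrix.diag_apply, Matrix.mul_apply]
  exact Finset.sum_nonneg fun j _ => by
    simpa [conjTranspose_apply] using star_mul_self_nonneg (A j i)

lemma posSemidef_iff_eq_transpose_mul_self {n : Type*} [Fintype n] {A : Matrix n n ℂ} :
    A.PosSemidef ↔ ∃ B : Matrix n n ℂ, A = Bᴴ * B := by
  refine ⟨fun hA => ?_, fun ⟨B, hB⟩ => hB ▸ posSemidef_conjTranspose_mul_self B⟩
  classical
  open scoped MatrixOrder in
  obtain ⟨X, hX, -, hXA⟩ :=
    CFC.exists_sqrt_of_isSelfAdjoint_of_quasispectrumRestricts hA.isHermitian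
      (QuasispectrumRestricts.nnreal_of_nonneg (Matrix.nonneg_iff_posSemidef.mpr hA))
  exact ⟨X, by rw [← hXA]; nth_rewrite 1 [← hX.star_eq]; rfl⟩

lemma gram_psd {n ι : Type*} [Fintype n] [Fintype ι]
    {ρ : Matrix n n ℂ} (hρ : ρ.PosSemidef) (N : ι → Matrix n n ℂ) :
    (Matrix.of fun i j => ((N i)ᴴ * N j * ρ).trace).PosSemidef := by
  obtain ⟨B, hB⟩ := posSemidef_iff_eq_transpose_mul_self.mp hρ
  rw [posSemidef_iff_dotProduct_mulVec]
  constructor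
  · ext i j
    simp only [conjTranspose_apply, Matrix.of_apply]
    rw [← Matrix.trace_conjTranspose, Matrix.conjTranspose_mul, Matrix.conjTranspose_mul,
      conjTranspose_conjTranspose, hρ.isHermitian.eq, Matrix.trace_mul_comm, Matrix.mul_assoc]
  · intro x
    have key : star x ⬝ᵥ (Matrix.of fun i j => ((N i)ᴴ * N j * ρ).trace).mulVec x
        = ((∑ j, x j • N j)ᴴ * (∑ j, x j • N j) * ρ).trace := by
      rw [conjTranspose_sum]
      simp only [conjTranspose_smul, Finset.sum_mul, Finset.mul_sum, trace_sum,
        Matrix.smul_mul, Matrix.mul_smul, trace_smul, smul_eq_mul, dotProduct,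
        mulVec, Pi.star_apply, Matrix.of_apply, RCLike.star_def]
      rw [Finset.sum_comm]
      refine Finset.sum_congr rfl fun i _ => ?_
      refine Finset.sum_congr rfl fun j _ => ?_
      ring
    rw [key, hB, ← Matrix.mul_assoc, Matrix.trace_mul_comm]
    have h2 : B * ((∑ j, x j • N j)ᴴ * ∑ j, x j • N j) * Bᴴ
        = ((∑ j, x j • N j) * Bᴴ)ᴴ * ((∑ j, x j • N j) * Bᴴ) := by
      simp only [Matrix.conjTranspose_mul, conjTranspose_conjTranspose, Matrix.mul_assoc]
    rw [← Matrix.mul_assoc, h2]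
    exact trace_CT_mul_self_nonneg _

lemma trace_mul_kron₂ {m n : Type*} [Fintype m] [Fintype n] [DecidableEq m]
    (M : Matrix (m × n) (m × n) ℂ) (A : Matrix m m ℂ) (B : Matrix n n ℂ) :
    (M * (A ⊗ₖ B)).trace = (ptrace₂ (M * ((1 : Matrix m m ℂ) ⊗ₖ B)) * A).trace := by
  simp only [Matrix.trace, Matrix.diag_apply, Matrix.mul_apply, ptrace₂, Matrix.of_apply,
    kroneckerMap_apply, Fintype.sum_prod_type, Matrix.one_apply, ite_mul, mul_ite, mul_zero,
    one_mul, zero_mul, Finset.sum_ite_eq, Finset.sum_ite_eq', Finset.mem_univ, if_true,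
    Finset.sum_mul, Finset.mul_sum, Finset.sum_ite_irrel, Finset.sum_const_zero]
  refine Finset.sum_congr rfl fun i _ => Eq.trans Finset.sum_comm ?_
  refine Finset.sum_congr rfl fun j _ => ?_
  refine Finset.sum_congr rfl fun k _ => ?_
  refine Finset.sum_congr rfl fun l _ => ?_
  ring

lemma trace_mul_kron₁ {m n : Type*} [Fintype m] [Fintype n] [DecidableEq n]
    (M : Matrix (m × n) (m × n) ℂ) (A : Matrix m m ℂ) (B : Matrix n n ℂ) :
    (M * (A ⊗ₖ B)).trace = (ptrace₁ (M * (A ⊗ₖ (1 : Matrix n n ℂ))) * B).trace := by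
  simp only [Matrix.trace, Matrix.diag_apply, Matrix.mul_apply, ptrace₁, Matrix.of_apply,
    kroneckerMap_apply, Fintype.sum_prod_type, Matrix.one_apply, ite_mul, mul_ite, mul_zero,
    one_mul, zero_mul, mul_one, Finset.sum_ite_eq, Finset.sum_ite_eq', Finset.mem_univ, if_true,
    Finset.sum_mul, Finset.mul_sum, Finset.sum_ite_irrel, Finset.sum_const_zero]
  refine Eq.trans Finset.sum_comm ?_
  refine Finset.sum_congr rfl fun k _ => ?_
  refine Eq.trans (Finset.sum_congr rfl fun i _ => Finset.sum_comm) ?_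
  refine Eq.trans Finset.sum_comm ?_
  refine Finset.sum_congr rfl fun l _ => ?_
  refine Finset.sum_congr rfl fun i _ => ?_
  refine Finset.sum_congr rfl fun j _ => ?_
  ring

lemma ptrace₂_isHermitian {m n : Type*} [Fintype m] [Fintype n] [DecidableEq m]
    {M : Matrix (m × n) (m × n) ℂ} {B : Matrix n n ℂ}
    (hM : M.IsHermitian) (hB : B.IsHermitian) :
    (ptrace₂ (M * ((1 : Matrix m m ℂ) ⊗ₖ B))).IsHermitian := by
  ext i j
  simp only [conjTranspose_apply, ptrace₂, Matrix.of_apply, Matrix.mul_apply,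
    Fintype.sum_prod_type, kroneckerMap_apply, Matrix.one_apply, mul_ite, ite_mul,
    mul_zero, zero_mul, mul_one, one_mul, Finset.sum_ite_irrel, Finset.sum_const_zero,
    Finset.sum_ite_eq, Finset.sum_ite_eq', Finset.mem_univ, if_true, star_sum, star_mul']
  refine Eq.trans Finset.sum_comm ?_
  refine Finset.sum_congr rfl fun k _ => ?_
  refine Finset.sum_congr rfl fun q _ => ?_
  rw [hM.apply, hB.apply, mul_comm]

lemma ptrace₁_isHermitian {m n : Type*} [Fintype m] [Fintype n] [DecidableEq n]
    {M : Matrix (m × n) (m × n) ℂ} {A : Matrix m m ℂ}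
    (hM : M.IsHermitian) (hA : A.IsHermitian) :
    (ptrace₁ (M * (A ⊗ₖ (1 : Matrix n n ℂ)))).IsHermitian := by
  ext i j
  simp only [conjTranspose_apply, ptrace₁, Matrix.of_apply, Matrix.mul_apply,
    Fintype.sum_prod_type, kroneckerMap_apply, Matrix.one_apply, mul_ite, ite_mul,
    mul_zero, zero_mul, mul_one, one_mul, Finset.sum_ite_irrel, Finset.sum_const_zero,
    Finset.sum_ite_eq, Finset.sum_ite_eq', Finset.mem_univ, if_true, star_sum, star_mul']
  refine Eq.trans Finset.sum_comm ?_
  refine Finset.sum_congr rfl fun k _ => ?_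
  refine Finset.sum_congr rfl fun q _ => ?_
  rw [hM.apply, hA.apply, mul_comm]

/-- For a product state `ρ₁ ⊗ ρ₂` and observables `M_i` on the
joint system, `Γ({M_i}, ρ₁ ⊗ ρ₂) − Γ({M_i^(1)}, ρ₁) − Γ({M_i^(2)}, ρ₂)` is
positive semidefinite, where `M^(1) = tr₂(M (1 ⊗ ρ₂))` and
`M^(2) = tr₁(M (ρ₁ ⊗ 1))` are the reduced observables. -/
theorem stmt2 {d₁ d₂ k : ℕ}
    (ρ₁ : Matrix (Fin d₁) (Fin d₁) ℂ) (ρ₂ : Matrix (Fin d₂) (Fin d₂) ℂ)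
    (hρ₁ : IsDensity ρ₁) (hρ₂ : IsDensity ρ₂)
    (M : Fin k → Matrix (Fin d₁ × Fin d₂) (Fin d₁ × Fin d₂) ℂ)
    (hM : ∀ i, (M i).IsHermitian) :
    (covMat M (ρ₁ ⊗ₖ ρ₂)
      - covMat (fun i => ptrace₂ (M i * ((1 : Matrix (Fin d₁) (Fin d₁) ℂ) ⊗ₖ ρ₂))) ρ₁
      - covMat (fun i => ptrace₁ (M i * (ρ₁ ⊗ₖ (1 : Matrix (Fin d₂) (Fin d₂) ℂ)))) ρ₂).PosSemidef := by
  obtain ⟨hρ₁psd, hρ₁tr⟩ := hρ₁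
  obtain ⟨hρ₂psd, hρ₂tr⟩ := hρ₂
  set ρ : Matrix (Fin d₁ × Fin d₂) (Fin d₁ × Fin d₂) ℂ := ρ₁ ⊗ₖ ρ₂ with hρdef
  set a : Fin k → Matrix (Fin d₁) (Fin d₁) ℂ :=
    fun i => ptrace₂ (M i * ((1 : Matrix (Fin d₁) (Fin d₁) ℂ) ⊗ₖ ρ₂)) with hadef
  set b : Fin k → Matrix (Fin d₂) (Fin d₂) ℂ :=
    fun i => ptrace₁ (M i * (ρ₁ ⊗ₖ (1 : Matrix (Fin d₂) (Fin d₂) ℂ))) with hbdef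
  -- positivity and hermiticity of the state
  have hρ : ρ.PosSemidef := by
    obtain ⟨B₁, h₁⟩ := posSemidef_iff_eq_transpose_mul_self.mp hρ₁psd
    obtain ⟨B₂, h₂⟩ := posSemidef_iff_eq_transpose_mul_self.mp hρ₂psd
    rw [hρdef, h₁, h₂, Matrix.mul_kronecker_mul, ← kron_conjTranspose]
    exact posSemidef_conjTranspose_mul_self _
  have hρt : ρ.trace = 1 := by
    rw [hρdef, Matrix.trace_kronecker, hρ₁tr, hρ₂tr, one_mul]
  have haH : ∀ i, (a i).IsHermitian := fun i =>
    ptrace₂_isHermitian (hM i) hρ₂psd.isHermitian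
  have hbH : ∀ i, (b i).IsHermitian := fun i =>
    ptrace₁_isHermitian (hM i) hρ₁psd.isHermitian
  -- the scalar trace identities
  have h1 : ∀ i, (M i * ρ).trace = (a i * ρ₁).trace := fun i =>
    trace_mul_kron₂ (M i) ρ₁ ρ₂
  have h2 : ∀ i, (M i * ρ).trace = (b i * ρ₂).trace := fun i =>
    trace_mul_kron₁ (M i) ρ₁ ρ₂
  have ha : ∀ i, ((a i ⊗ₖ (1 : Matrix (Fin d₂) (Fin d₂) ℂ)) * ρ).trace = (a i * ρ₁).trace := by
    intro i
    rw [hρdef, ← Matrix.mul_kronecker_mul, Matrix.trace_kronecker, one_mul, hρ₂tr, mul_one]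
  have hb : ∀ i, (((1 : Matrix (Fin d₁) (Fin d₁) ℂ) ⊗ₖ b i) * ρ).trace = (b i * ρ₂).trace := by
    intro i
    rw [hρdef, ← Matrix.mul_kronecker_mul, Matrix.trace_kronecker, one_mul, hρ₁tr, one_mul]
  have hMa : ∀ i j, (M i * ((a j ⊗ₖ (1 : Matrix (Fin d₂) (Fin d₂) ℂ)) * ρ)).trace
      = (a i * (a j * ρ₁)).trace := by
    intro i j
    rw [hρdef, ← Matrix.mul_kronecker_mul, one_mul, ← Matrix.mul_assoc,
      trace_mul_kron₂ (M i) (a j * ρ₁) ρ₂, ← Matrix.mul_assoc]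
  have hMb : ∀ i j, (M i * (((1 : Matrix (Fin d₁) (Fin d₁) ℂ) ⊗ₖ b j) * ρ)).trace
      = (b i * (b j * ρ₂)).trace := by
    intro i j
    rw [hρdef, ← Matrix.mul_kronecker_mul, one_mul, ← Matrix.mul_assoc,
      trace_mul_kron₁ (M i) ρ₁ (b j * ρ₂), ← Matrix.mul_assoc]
  have haM : ∀ i j, ((a i ⊗ₖ (1 : Matrix (Fin d₂) (Fin d₂) ℂ)) * (M j * ρ)).trace
      = (a i * (a j * ρ₁)).trace := by
    intro i j
    rw [Matrix.trace_mul_comm, Matrix.mul_assoc, hρdef, ← Matrix.mul_kronecker_mul, mul_one,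
      ← Matrix.mul_assoc, trace_mul_kron₂ (M j) (ρ₁ * a i) ρ₂, ← Matrix.mul_assoc,
      Matrix.trace_mul_comm, ← Matrix.mul_assoc]
  have hbM : ∀ i j, (((1 : Matrix (Fin d₁) (Fin d₁) ℂ) ⊗ₖ b i) * (M j * ρ)).trace
      = (b i * (b j * ρ₂)).trace := by
    intro i j
    rw [Matrix.trace_mul_comm, Matrix.mul_assoc, hρdef, ← Matrix.mul_kronecker_mul, mul_one,
      ← Matrix.mul_assoc, trace_mul_kron₁ (M j) ρ₁ (ρ₂ * b i), ← Matrix.mul_assoc,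
      Matrix.trace_mul_comm, ← Matrix.mul_assoc]
  have haa : ∀ i j, ((a i ⊗ₖ (1 : Matrix (Fin d₂) (Fin d₂) ℂ))
      * ((a j ⊗ₖ (1 : Matrix (Fin d₂) (Fin d₂) ℂ)) * ρ)).trace = (a i * (a j * ρ₁)).trace := by
    intro i j
    rw [hρdef, ← Matrix.mul_kronecker_mul, one_mul, ← Matrix.mul_kronecker_mul, one_mul,
      Matrix.trace_kronecker, hρ₂tr, mul_one]
  have hbb : ∀ i j, (((1 : Matrix (Fin d₁) (Fin d₁) ℂ) ⊗ₖ b i)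
      * (((1 : Matrix (Fin d₁) (Fin d₁) ℂ) ⊗ₖ b j) * ρ)).trace = (b i * (b j * ρ₂)).trace := by
    intro i j
    rw [hρdef, ← Matrix.mul_kronecker_mul, one_mul, ← Matrix.mul_kronecker_mul, one_mul,
      Matrix.trace_kronecker, hρ₁tr, one_mul]
  have hab : ∀ i j, ((a i ⊗ₖ (1 : Matrix (Fin d₂) (Fin d₂) ℂ))
      * (((1 : Matrix (Fin d₁) (Fin d₁) ℂ) ⊗ₖ b j) * ρ)).trace
      = (a i * ρ₁).trace * (b j * ρ₂).trace := by
    intro i j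
    rw [hρdef, ← Matrix.mul_kronecker_mul, ← Matrix.mul_kronecker_mul]
    simp [Matrix.trace_kronecker]
  have hba : ∀ i j, (((1 : Matrix (Fin d₁) (Fin d₁) ℂ) ⊗ₖ b i)
      * ((a j ⊗ₖ (1 : Matrix (Fin d₂) (Fin d₂) ℂ)) * ρ)).trace
      = (a j * ρ₁).trace * (b i * ρ₂).trace := by
    intro i j
    rw [hρdef, ← Matrix.mul_kronecker_mul, ← Matrix.mul_kronecker_mul]
    simp [Matrix.trace_kronecker]
  have hmreal : ∀ i, star ((M i * ρ).trace) = (M i * ρ).trace := by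
    intro i
    rw [← Matrix.trace_conjTranspose, Matrix.conjTranspose_mul, (hM i).eq,
      hρ.isHermitian.eq, Matrix.trace_mul_comm]
  -- the centered observables
  set N : Fin k → Matrix (Fin d₁ × Fin d₂) (Fin d₁ × Fin d₂) ℂ :=
    fun i => M i - a i ⊗ₖ (1 : Matrix (Fin d₂) (Fin d₂) ℂ)
      - (1 : Matrix (Fin d₁) (Fin d₁) ℂ) ⊗ₖ b i
      + ((M i * ρ).trace) • (1 : Matrix (Fin d₁ × Fin d₂) (Fin d₁ × Fin d₂) ℂ) with hNdef
  have hNH : ∀ i, (N i)ᴴ = N i := by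
    intro i
    simp only [hNdef, conjTranspose_add, conjTranspose_sub, conjTranspose_smul,
      conjTranspose_one, (hM i).eq, kron_conjTranspose, (haH i).eq, (hbH i).eq,
      hmreal i]
  have key : covMat M ρ - covMat a ρ₁ - covMat b ρ₂
      = Matrix.of fun i j => ((N i)ᴴ * N j * ρ).trace := by
    ext i j
    simp only [covMat, Matrix.sub_apply, Matrix.of_apply]
    rw [hNH i]
    simp only [hNdef, sub_mul, mul_sub, add_mul, mul_add, Matrix.smul_mul, Matrix.mul_smul,
      one_mul, mul_one, Matrix.mul_assoc, trace_sub, trace_add, trace_smul, smul_eq_mul]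
    rw [hMa i j, hMb i j, haM i j, hbM i j, haa i j, hbb i j, hab i j, hba i j,
      ha i, ha j, hb i, hb j, hρt, ← h1 i, ← h1 j, ← h2 i, ← h2 j]
    ring
  rw [key]
  exact gram_psd hρ N
end
end

section
/- Let ρ₁ and ρ₂ be density matrices on C^{d₁} and C^{d₂}, and let {A_k}_{k=1}^{p} and {B_l}_{l=1}^{q} be Hermitian matrices on C^{d₁} and C^{d₂} respectively. Then, indexing rows and columns by pairs (k,l), the covariance matrix of the product observables satisfies Γ({A_k ⊗ B_l}, ρ₁ ⊗ ρ₂) = |a⟩⟨a| ⊗ Γ({B_l}, ρ₂) + Γ({A_k}, ρ₁) ⊗ |b⟩⟨b| + Γ({A_k}, ρ₁) ⊗ Γ({B_l}, ρ₂), where a ∈ R^p is the vector with entries a_k = tr(A_k ρ₁), b ∈ R^q has entries b_l = tr(B_l ρ₂), |a⟩⟨a| denotes the rank-one matrix a aᵀ, and ⊗ denotes the Kronecker product of matrices. -/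
open Matrix Kronecker BigOperators
open scoped ComplexOrder

noncomputable section

/-- Covariance matrix of product observables on a product
state: `Γ({A_k ⊗ B_l}, ρ₁ ⊗ ρ₂) = |a⟩⟨a| ⊗ Γ(B, ρ₂) + Γ(A, ρ₁) ⊗ |b⟩⟨b|
+ Γ(A, ρ₁) ⊗ Γ(B, ρ₂)` with `a_k = tr(A_k ρ₁)`, `b_l = tr(B_l ρ₂)`. -/
theorem stmt3 {d₁ d₂ p q : ℕ}
    (ρ₁ : Matrix (Fin d₁) (Fin d₁) ℂ) (ρ₂ : Matrix (Fin d₂) (Fin d₂) ℂ)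
    (hρ₁ : IsDensity ρ₁) (hρ₂ : IsDensity ρ₂)
    (A : Fin p → Matrix (Fin d₁) (Fin d₁) ℂ) (hA : ∀ k, (A k).IsHermitian)
    (B : Fin q → Matrix (Fin d₂) (Fin d₂) ℂ) (hB : ∀ l, (B l).IsHermitian)
    (a : Fin p → ℂ) (ha : ∀ k, a k = (A k * ρ₁).trace)
    (b : Fin q → ℂ) (hb : ∀ l, b l = (B l * ρ₂).trace) :
    covMat (fun kl : Fin p × Fin q => A kl.1 ⊗ₖ B kl.2) (ρ₁ ⊗ₖ ρ₂) =
      vecMulVec a a ⊗ₖ covMat B ρ₂ + covMat A ρ₁ ⊗ₖ vecMulVec b b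
        + covMat A ρ₁ ⊗ₖ covMat B ρ₂ := by
  ext ⟨k, l⟩ ⟨k', l'⟩
  simp only [covMat, Matrix.add_apply, Matrix.of_apply, kroneckerMap_apply,
    vecMulVec_apply, ← Matrix.mul_kronecker_mul, Matrix.trace_kronecker, ha, hb]
  ring
end
end

section
/- Let ρ_BTN be a basic triangle network state and equip Alice with the product observables {G_α^{A₁} ⊗ G_β^{A₂}} and Bob with {G_γ^{B₁} ⊗ G_δ^{B₂}}, built from complete orthogonal sets of observables on C^d. Set a_α^{(1)} = tr(G_α ρ^{(A₁)}) and b_δ^{(2)} = tr(G_δ ρ^{(B₂)}). Then: (i) the covariance matrix of the reduced observables (G_α ⊗ G_β)^{(2)} = a_α^{(1)} G_β on the state ρ^{(A₂)} equals |a^{(1)}⟩⟨a^{(1)}| ⊗ Γ({G_β}, ρ^{(A₂)}), where |a^{(1)}⟩⟨a^{(1)}| is the rank-one matrix built from the vector (a_α^{(1)})_α; and (ii) the off-diagonal block γ_E of Γ(ρ_BTN) between Alice and Bob has entries [γ_E]_{(αβ),(γδ)} = a_α^{(1)} b_δ^{(2)} · ( tr((G_β ⊗ G_γ) ρ^{(A₂B₁)})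 − tr(G_β ρ^{(A₂)})·tr(G_γ ρ^{(B₁)}) ). -/
open Matrix Kronecker BigOperators
open scoped ComplexOrder

noncomputable section

lemma trace_submatrix_equiv' {n m : Type*} [Fintype n] [Fintype m] (e : n ≃ m)
    (A : Matrix m m ℂ) : (A.submatrix e e).trace = A.trace := by
  simp only [Matrix.trace, Matrix.diag_apply, Matrix.submatrix_apply]
  exact Fintype.sum_equiv e _ _ fun i => rfl

lemma trace_sub_mul {n m : Type*} [Fintype n] [Fintype m] [DecidableEq n] [DecidableEq m]
    (e : n ≃ m) (A : Matrix m m ℂ) (B : Matrix n n ℂ) :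
    (A.submatrix e e * B).trace = (A * B.submatrix e.symm e.symm).trace := by
  have : B = (B.submatrix e.symm e.symm).submatrix e e := by
    ext i j; simp
  conv_lhs => rw [this]
  rw [Matrix.submatrix_mul_equiv A (B.submatrix e.symm e.symm) e e e,
    trace_submatrix_equiv']

lemma trace_kron_one_mul {m n : Type*} [Fintype m] [Fintype n] [DecidableEq n]
    (M : Matrix m m ℂ) (X : Matrix (m × n) (m × n) ℂ) :
    ((M ⊗ₖ (1 : Matrix n n ℂ)) * X).trace = (M * ptrace₂ X).trace := by
  simp only [Matrix.trace, Matrix.diag_apply, Matrix.mul_apply, Matrix.kroneckerMap_apply,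
    ptrace₂, Matrix.of_apply, Fintype.sum_prod_type, Matrix.one_apply, ite_mul, mul_ite,
    mul_zero, zero_mul, one_mul, mul_one, Finset.sum_ite_eq, Finset.sum_ite_eq',
    Finset.mem_univ, if_true, Finset.mul_sum, Finset.sum_mul]
  refine Finset.sum_congr rfl fun x _ => ?_
  rw [Finset.sum_comm]

/-- Reorder TriIdx ((c2,a1),((a2,b1),(b2,c1))) ↦ (((a1,a2),(b1,b2)),(c2,c1)). -/
def eQ (d : ℕ) : TriIdx d ≃ (D2 d × D2 d) × D2 d where
  toFun p := (((p.1.2, p.2.1.1), (p.2.1.2, p.2.2.1)), (p.1.1, p.2.2.2))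
  invFun q := ((q.2.1, q.1.1.1), ((q.1.1.2, q.1.2.1), (q.1.2.2, q.2.2)))
  left_inv := fun _ => rfl
  right_inv := fun _ => rfl

/-- Reorder ((a1,a2),(b1,b2)) ↦ (a1,((a2,b1),b2)). -/
def eF (d : ℕ) : D2 d × D2 d ≃ Fin d × (D2 d × Fin d) where
  toFun p := (p.1.1, ((p.1.2, p.2.1), p.2.2))
  invFun q := ((q.1, q.2.1.1), (q.2.1.2, q.2.2))
  left_inv := fun _ => rfl
  right_inv := fun _ => rfl

lemma embedA_eq {d : ℕ} (M : Matrix (D2 d) (D2 d) ℂ) :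
    embedA M = ((M ⊗ₖ (1 : Matrix (D2 d) (D2 d) ℂ)) ⊗ₖ (1 : Matrix (D2 d) (D2 d) ℂ)).submatrix
      (eQ d) (eQ d) := by
  ext p q
  simp only [embedA, Matrix.of_apply, Matrix.submatrix_apply, eQ, Equiv.coe_fn_mk,
    Matrix.kroneckerMap_apply, Matrix.one_apply, Prod.mk.injEq, mul_ite, mul_one, mul_zero,
    Prod.ext_iff]
  split_ifs <;> tauto

lemma embedB_eq {d : ℕ} (N : Matrix (D2 d) (D2 d) ℂ) :
    embedB N = (((1 : Matrix (D2 d) (D2 d) ℂ) ⊗ₖ N) ⊗ₖ (1 : Matrix (D2 d) (D2 d) ℂ)).submatrix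
      (eQ d) (eQ d) := by
  ext p q
  simp only [embedB, Matrix.of_apply, Matrix.submatrix_apply, eQ, Equiv.coe_fn_mk,
    Matrix.kroneckerMap_apply, Matrix.one_apply, Prod.mk.injEq, mul_ite, mul_one, mul_zero,
    ite_mul, one_mul, zero_mul, Prod.ext_iff]
  split_ifs <;> tauto

lemma embedA_mul_embedB {d : ℕ} (M N : Matrix (D2 d) (D2 d) ℂ) :
    embedA M * embedB N = ((M ⊗ₖ N) ⊗ₖ (1 : Matrix (D2 d) (D2 d) ℂ)).submatrix
      (eQ d) (eQ d) := by
  rw [embedA_eq, embedB_eq, Matrix.submatrix_mul_equiv, ← Matrix.mul_kronecker_mul,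
    ← Matrix.mul_kronecker_mul, Matrix.mul_one, Matrix.one_mul, Matrix.mul_one]

lemma sigma_eq {d : ℕ} (ρa ρb ρc : Matrix (D2 d) (D2 d) ℂ) :
    ptrace₂ ((btnState ρa ρb ρc).submatrix (eQ d).symm (eQ d).symm)
      = (margA1 ρb ⊗ₖ (ρc ⊗ₖ margB2 ρa)).submatrix (eF d) (eF d) := by
  ext p q
  simp only [ptrace₂, btnState, Matrix.of_apply, Matrix.submatrix_apply, eQ, eF,
    Equiv.coe_fn_symm_mk, Equiv.coe_fn_mk, Matrix.kroneckerMap_apply, margA1, margB2,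
    ptrace₁, ptrace₂, Fintype.sum_prod_type, Finset.sum_mul, Finset.mul_sum]
  rw [Finset.sum_comm]

lemma kron4 {d : ℕ} (G1 G2 H1 H2 : Matrix (Fin d) (Fin d) ℂ) :
    (G1 ⊗ₖ G2) ⊗ₖ (H1 ⊗ₖ H2)
      = (G1 ⊗ₖ ((G2 ⊗ₖ H1) ⊗ₖ H2)).submatrix (eF d) (eF d) := by
  ext p q
  simp only [Matrix.kroneckerMap_apply, Matrix.submatrix_apply, eF, Equiv.coe_fn_mk]
  ring

/-- The master trace formula for the Alice–Bob correlator. -/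
lemma traceAB {d : ℕ} (ρa ρb ρc : Matrix (D2 d) (D2 d) ℂ)
    (G1 G2 H1 H2 : Matrix (Fin d) (Fin d) ℂ) :
    (embedA (G1 ⊗ₖ G2) * embedB (H1 ⊗ₖ H2) * btnState ρa ρb ρc).trace
      = (G1 * margA1 ρb).trace * (((G2 ⊗ₖ H1) * ρc).trace * (H2 * margB2 ρa).trace) := by
  rw [embedA_mul_embedB, trace_sub_mul, trace_kron_one_mul, sigma_eq, kron4,
    Matrix.submatrix_mul_equiv, trace_submatrix_equiv', ← Matrix.mul_kronecker_mul,
    ← Matrix.mul_kronecker_mul, Matrix.trace_kronecker, Matrix.trace_kronecker]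

lemma embedB_one {d : ℕ} : embedB (1 : Matrix (D2 d) (D2 d) ℂ) = 1 := by
  ext p q
  simp only [embedB, Matrix.of_apply, Matrix.one_apply, Prod.ext_iff]
  split_ifs <;> tauto

lemma embedA_one {d : ℕ} : embedA (1 : Matrix (D2 d) (D2 d) ℂ) = 1 := by
  ext p q
  simp only [embedA, Matrix.of_apply, Matrix.one_apply, Prod.ext_iff]
  split_ifs <;> tauto

lemma trace_ptrace₂ {m n : Type*} [Fintype m] [Fintype n] (X : Matrix (m × n) (m × n) ℂ) :
    (ptrace₂ X).trace = X.trace := by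
  simp [ptrace₂, Matrix.trace, Fintype.sum_prod_type]

lemma trace_ptrace₁ {m n : Type*} [Fintype m] [Fintype n] (X : Matrix (m × n) (m × n) ℂ) :
    (ptrace₁ X).trace = X.trace := by
  simp only [ptrace₁, Matrix.trace, Matrix.diag_apply, Matrix.of_apply, Fintype.sum_prod_type]
  rw [Finset.sum_comm]

lemma trace_one_kron_mul {m n : Type*} [Fintype m] [Fintype n] [DecidableEq m]
    (N : Matrix n n ℂ) (X : Matrix (m × n) (m × n) ℂ) :
    (((1 : Matrix m m ℂ) ⊗ₖ N) * X).trace = (N * ptrace₁ X).trace := by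
  simp only [Matrix.trace, Matrix.diag_apply, Matrix.mul_apply, Matrix.kroneckerMap_apply,
    ptrace₁, Matrix.of_apply, Fintype.sum_prod_type, Matrix.one_apply, ite_mul, mul_ite,
    mul_zero, zero_mul, one_mul, mul_one, Finset.sum_ite_irrel, Finset.sum_const_zero,
    Finset.sum_ite_eq, Finset.sum_ite_eq',
    Finset.mem_univ, if_true, Finset.mul_sum, Finset.sum_mul]
  rw [Finset.sum_comm]
  refine Finset.sum_congr rfl fun i _ => ?_
  rw [Finset.sum_comm]

/-- Alice's single-party expectation. -/
lemma traceA {d : ℕ} (ρa ρb ρc : Matrix (D2 d) (D2 d) ℂ)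
    (G1 G2 : Matrix (Fin d) (Fin d) ℂ) :
    (embedA (G1 ⊗ₖ G2) * btnState ρa ρb ρc).trace
      = (G1 * margA1 ρb).trace * ((G2 * margA2 ρc).trace * ρa.trace) := by
  have h : embedA (G1 ⊗ₖ G2) * btnState ρa ρb ρc
      = embedA (G1 ⊗ₖ G2) * embedB ((1 : Matrix (Fin d) (Fin d) ℂ) ⊗ₖ 1)
          * btnState ρa ρb ρc := by
    rw [Matrix.one_kronecker_one, embedB_one, Matrix.mul_one]
  rw [h, traceAB, trace_kron_one_mul]
  have h2 : (((1 : Matrix (Fin d) (Fin d) ℂ)) * margB2 ρa).trace = ρa.trace := by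
    rw [Matrix.one_mul, margB2, trace_ptrace₂]
  rw [h2]
  rfl

/-- Bob's single-party expectation. -/
lemma traceB {d : ℕ} (ρa ρb ρc : Matrix (D2 d) (D2 d) ℂ)
    (H1 H2 : Matrix (Fin d) (Fin d) ℂ) :
    (embedB (H1 ⊗ₖ H2) * btnState ρa ρb ρc).trace
      = ρb.trace * ((H1 * margB1 ρc).trace * (H2 * margB2 ρa).trace) := by
  have h : embedB (H1 ⊗ₖ H2) * btnState ρa ρb ρc
      = embedA ((1 : Matrix (Fin d) (Fin d) ℂ) ⊗ₖ 1) * embedB (H1 ⊗ₖ H2)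
          * btnState ρa ρb ρc := by
    rw [Matrix.one_kronecker_one, embedA_one, Matrix.one_mul]
  rw [h, traceAB, trace_one_kron_mul]
  have h1 : (((1 : Matrix (Fin d) (Fin d) ℂ)) * margA1 ρb).trace = ρb.trace := by
    rw [Matrix.one_mul, margA1, trace_ptrace₁]
  rw [h1]
  rfl
lemma redA2_kron {d : ℕ} (ρb : Matrix (D2 d) (D2 d) ℂ)
    (G1 G2 : Matrix (Fin d) (Fin d) ℂ) :
    redA2 ρb (G1 ⊗ₖ G2) = (G1 * margA1 ρb).trace • G2 := by
  ext i j
  simp [redA2, ptrace₁, Matrix.mul_apply, Matrix.kroneckerMap_apply, Matrix.trace,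
    Matrix.diag, Fintype.sum_prod_type, Matrix.one_apply, Finset.mul_sum, Finset.sum_mul, mul_ite, ite_mul, mul_zero, zero_mul]
  exact Finset.sum_congr rfl fun k _ => Finset.sum_congr rfl fun l _ => by ring

lemma covMat_smul {n ι κ : Type*} [Fintype n] (a : ι → ℂ) (M : κ → Matrix n n ℂ)
    (ρ : Matrix n n ℂ) :
    covMat (fun p : ι × κ => a p.1 • M p.2) ρ = vecMulVec a a ⊗ₖ covMat M ρ := by
  ext p q
  simp [covMat, vecMulVec, Matrix.smul_mul, Matrix.mul_smul, Matrix.kroneckerMap_apply]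
  ring

/-- For a BTN state with product observables built from
complete orthogonal sets: (i) the covariance matrix of Alice's reduced
observables `(G_α ⊗ G_β)^(2) = a_α^{(1)} G_β` on `ρ^{(A₂)}` equals
`|a^{(1)}⟩⟨a^{(1)}| ⊗ Γ({G_β}, ρ^{(A₂)})`; (ii) the Alice–Bob off-diagonal
block has entries
`a_α^{(1)} b_δ^{(2)} (tr((G_β ⊗ G_γ) ρ^{(A₂B₁)}) − tr(G_β ρ^{(A₂)}) tr(G_γ ρ^{(B₁)}))`. -/
theorem stmt4 {d : ℕ} (hd : 1 ≤ d)
    (ρa ρb ρc : Matrix (D2 d) (D2 d) ℂ)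
    (hρa : IsDensity ρa) (hρb : IsDensity ρb) (hρc : IsDensity ρc)
    (GA1 GA2 GB1 GB2 : Fin (d ^ 2) → Matrix (Fin d) (Fin d) ℂ)
    (hGA1herm : ∀ α, (GA1 α).IsHermitian)
    (hGA2herm : ∀ β, (GA2 β).IsHermitian)
    (hGB1herm : ∀ γ, (GB1 γ).IsHermitian)
    (hGB2herm : ∀ δ, (GB2 δ).IsHermitian)
    (hGA1 : ∀ α α', (GA1 α * GA1 α').trace = if α = α' then (d : ℂ) else 0)
    (hGA2 : ∀ β β', (GA2 β * GA2 β').trace = if β = β' then (d : ℂ) else 0)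
    (hGB1 : ∀ γ γ', (GB1 γ * GB1 γ').trace = if γ = γ' then (d : ℂ) else 0)
    (hGB2 : ∀ δ δ', (GB2 δ * GB2 δ').trace = if δ = δ' then (d : ℂ) else 0)
    (a : Fin (d ^ 2) → ℂ) (ha : ∀ α, a α = (GA1 α * margA1 ρb).trace)
    (b : Fin (d ^ 2) → ℂ) (hb : ∀ δ, b δ = (GB2 δ * margB2 ρa).trace) :
    -- (i) CM of the reduced observables on ρ^{(A₂)}
    covMat (fun p : Fin (d ^ 2) × Fin (d ^ 2) => redA2 ρb (GA1 p.1 ⊗ₖ GA2 p.2))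
        (margA2 ρc) =
      vecMulVec a a ⊗ₖ covMat GA2 (margA2 ρc)
    ∧
    -- (ii) entries of the off-diagonal block γ_E of Γ(ρ_BTN)
    (∀ α β γ δ,
      (embedA (GA1 α ⊗ₖ GA2 β) * embedB (GB1 γ ⊗ₖ GB2 δ) * btnState ρa ρb ρc).trace -
          (embedA (GA1 α ⊗ₖ GA2 β) * btnState ρa ρb ρc).trace *
            (embedB (GB1 γ ⊗ₖ GB2 δ) * btnState ρa ρb ρc).trace =
        a α * b δ *
          (((GA2 β ⊗ₖ GB1 γ) * ρc).trace -
            (GA2 β * margA2 ρc).trace * (GB1 γ * margB1 ρc).trace)) := by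
  constructor
  · have hred : (fun p : Fin (d ^ 2) × Fin (d ^ 2) => redA2 ρb (GA1 p.1 ⊗ₖ GA2 p.2))
        = fun p : Fin (d ^ 2) × Fin (d ^ 2) => a p.1 • GA2 p.2 :=
      funext fun p => by rw [redA2_kron, ha]
    rw [hred, covMat_smul]
  · intro α β γ δ
    rw [traceAB, traceA, traceB, hρa.2, hρb.2, ha, hb]
    ring
end
end

section
/- Let A be a Hermitian p×p matrix, B a Hermitian q×q matrix, and X a complex p×q matrix such that the (p+q)×(p+q) block matrix [[A, X],[X†, B]] is positive semidefinite. Then 2‖X‖_tr ≤ tr(A) + tr(B). -/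
open Matrix BigOperators
open scoped ComplexOrder

noncomputable section

/-- The trace norm `‖X‖_tr = tr √(X†X)` of a complex matrix. -/
def traceNorm {m n : Type*} [Fintype m] [Fintype n] [DecidableEq n]
    (X : Matrix m n ℂ) : ℝ :=
  let hH := (Matrix.posSemidef_conjTranspose_mul_self X).isHermitian
  (((hH.eigenvectorUnitary : Matrix n n ℂ) *
      diagonal (fun i => ((Real.sqrt (hH.eigenvalues i) : ℝ) : ℂ)) *
      (star hH.eigenvectorUnitary : Matrix n n ℂ))).trace.re

/-- Real part of the trace of a PSD complex matrix is nonnegative. -/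
lemma psd_trace_re_nonneg {n : Type*} [Fintype n] [DecidableEq n] {M : Matrix n n ℂ}
    (hM : M.PosSemidef) : 0 ≤ M.trace.re := by
  have h : ∀ i, 0 ≤ (M i i).re := by
    intro i
    have h2 := hM.re_dotProduct_nonneg (Pi.single i 1)
    simpa [dotProduct, Matrix.mulVec, Pi.single_apply, Finset.sum_ite_eq,
      mul_comm] using h2
  rw [Matrix.trace]
  rw [Complex.re_sum]
  exact Finset.sum_nonneg fun i _ => h i

/-- `U * diagonal (real d) * Uᴴ`. -/
def Wd {n : Type*} [Fintype n] [DecidableEq n] (U : Matrix n n ℂ) (d : n → ℝ) :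
    Matrix n n ℂ :=
  U * Matrix.diagonal (fun i => (d i : ℂ)) * Uᴴ

lemma Wd_mul {n : Type*} [Fintype n] [DecidableEq n] {U : Matrix n n ℂ}
    (hU : Uᴴ * U = 1) (d e : n → ℝ) :
    Wd U d * Wd U e = Wd U (fun i => d i * e i) := by
  unfold Wd
  rw [Matrix.mul_assoc (U * _) Uᴴ (U * _ * Uᴴ), ← Matrix.mul_assoc Uᴴ (U * _) Uᴴ,
    ← Matrix.mul_assoc Uᴴ U _, hU, Matrix.one_mul, ← Matrix.mul_assoc,
    Matrix.mul_assoc U _ _, Matrix.diagonal_mul_diagonal]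
  simp only [← Complex.ofReal_mul]

lemma Wd_herm {n : Type*} [Fintype n] [DecidableEq n] (U : Matrix n n ℂ) (d : n → ℝ) :
    (Wd U d)ᴴ = Wd U d := by
  unfold Wd
  have hs : star (fun i => ((d i : ℂ))) = fun i => ((d i : ℂ)) := by
    funext i
    simp [Complex.conj_ofReal]
  rw [Matrix.conjTranspose_mul, Matrix.conjTranspose_mul,
    Matrix.conjTranspose_conjTranspose, Matrix.diagonal_conjTranspose, hs, ← Matrix.mul_assoc]

lemma Wd_congr {n : Type*} [Fintype n] [DecidableEq n] (U : Matrix n n ℂ) {d e : n → ℝ}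
    (h : ∀ i, d i = e i) : Wd U d = Wd U e := by
  rw [show d = e from funext h]

lemma psd_sqrt_sq {n : Type*} [Fintype n] [DecidableEq n] {M : Matrix n n ℂ}
    (hM : M.PosSemidef) :
    Wd (hM.1.eigenvectorUnitary : Matrix n n ℂ) (fun i => Real.sqrt (hM.1.eigenvalues i)) *
      Wd (hM.1.eigenvectorUnitary : Matrix n n ℂ) (fun i => Real.sqrt (hM.1.eigenvalues i))
      = M := by
  have hU2 : (hM.1.eigenvectorUnitary : Matrix n n ℂ)ᴴ *
      (hM.1.eigenvectorUnitary : Matrix n n ℂ) = 1 := by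
    have h := hM.1.eigenvectorUnitary.2
    rw [Matrix.mem_unitaryGroup_iff'] at h
    simpa [Matrix.star_eq_conjTranspose] using h
  rw [Wd_mul hU2]
  rw [Wd_congr _ (e := hM.1.eigenvalues)
    (fun i => Real.mul_self_sqrt (hM.eigenvalues_nonneg i))]
  conv_rhs => rw [hM.1.spectral_theorem]
  unfold Wd
  simp [Function.comp_def, Matrix.star_eq_conjTranspose]

/-- If the block matrix `[[A, X], [X†, B]]` is positive
semidefinite, then `2‖X‖_tr ≤ tr A + tr B`. -/
theorem stmt10 {p q : ℕ}
    (A : Matrix (Fin p) (Fin p) ℂ) (hA : A.IsHermitian)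
    (B : Matrix (Fin q) (Fin q) ℂ) (hB : B.IsHermitian)
    (X : Matrix (Fin p) (Fin q) ℂ)
    (hblock : (Matrix.fromBlocks A X Xᴴ B).PosSemidef) :
    2 * traceNorm X ≤ A.trace.re + B.trace.re := by
  classical
  have hH : (Xᴴ * X).PosSemidef := Matrix.posSemidef_conjTranspose_mul_self X
  set S : Matrix (Fin q) (Fin q) ℂ := Wd (hH.1.eigenvectorUnitary : Matrix (Fin q) (Fin q) ℂ)
    (fun i => Real.sqrt (hH.1.eigenvalues i)) with hSdef
  have htn : traceNorm X = S.trace.re := rfl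
  set U : Matrix (Fin q) (Fin q) ℂ := (hH.1.eigenvectorUnitary : Matrix (Fin q) (Fin q) ℂ)
    with hUdef
  have hU2 : Uᴴ * U = 1 := by
    have h := hH.1.eigenvectorUnitary.2
    rw [Matrix.mem_unitaryGroup_iff'] at h
    simpa [Matrix.star_eq_conjTranspose] using h
  set ν : Fin q → ℝ := fun i => Real.sqrt (hH.1.eigenvalues i) with hνdef
  have hSW : S = Wd U ν := rfl
  have hSS : S * S = Xᴴ * X := psd_sqrt_sq hH
  set τ : Fin q → ℝ := fun i => (ν i)⁻¹ with hτdef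
  set T : Matrix (Fin q) (Fin q) ℂ := Wd U τ with hTdef
  set C : Matrix (Fin p) (Fin q) ℂ := X * T with hCdef
  -- X† C = S
  have hXC : Xᴴ * C = S := by
    rw [hCdef, ← Matrix.mul_assoc, ← hSS, Matrix.mul_assoc, hSW, hTdef,
      Wd_mul hU2, Wd_mul hU2]
    refine Wd_congr U fun i => ?_
    rcases eq_or_ne (ν i) 0 with h | h
    · simp [hτdef, h]
    · simp only [hτdef]; field_simp
  -- tr(C†X).re = tr(S).re
  have hCXS : (Cᴴ * X).trace.re = S.trace.re := by
    have h1 : (Cᴴ * X)ᴴ = Xᴴ * C := by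
      rw [Matrix.conjTranspose_mul, Matrix.conjTranspose_conjTranspose]
    have h2 : (Xᴴ * C).trace = star (Cᴴ * X).trace := by
      rw [← h1, Matrix.trace_conjTranspose]
    have h3 := congrArg Complex.re h2
    rw [hXC] at h3
    simpa using h3.symm
  -- the big congruence
  set N : Matrix (Fin p ⊕ Fin q) (Fin q) ℂ := Matrix.fromRows C (-1) with hNdef
  have hZpsd : (Nᴴ * (Matrix.fromBlocks A X Xᴴ B) * N).PosSemidef :=
    hblock.conjTranspose_mul_mul_same N
  have hNform : Nᴴ * (Matrix.fromBlocks A X Xᴴ B) * N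
      = Cᴴ * (A * C) + -(Cᴴ * X) + (-(Xᴴ * C) + B) := by
    rw [hNdef, Matrix.conjTranspose_fromRows_eq_fromCols_conjTranspose,
      Matrix.mul_assoc, Matrix.fromBlocks_mul_fromRows, Matrix.fromCols_mul_fromRows]
    simp only [Matrix.conjTranspose_neg, Matrix.conjTranspose_one, Matrix.mul_neg,
      Matrix.mul_one, Matrix.neg_mul, Matrix.one_mul, Matrix.mul_add, neg_neg]
  have htr : 0 ≤ (Cᴴ * (A * C)).trace.re - (Cᴴ * X).trace.re - (Xᴴ * C).trace.re
      + B.trace.re := by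
    have h0 := psd_trace_re_nonneg (hNform ▸ hZpsd)
    simp only [Matrix.trace_add, Matrix.trace_neg, Complex.add_re, Complex.neg_re] at h0
    linarith
  -- A is PSD
  have hApsd : A.PosSemidef := by
    have h := hblock.submatrix (Sum.inl : Fin p → Fin p ⊕ Fin q)
    have he : (Matrix.fromBlocks A X Xᴴ B).submatrix (Sum.inl : Fin p → Fin p ⊕ Fin q)
        Sum.inl = A := by
      ext i j
      simp
    rwa [he] at h
  -- Q is a projection
  have hCH : Cᴴ = T * Xᴴ := by
    rw [hCdef, Matrix.conjTranspose_mul, hTdef, Wd_herm]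
  set Q : Matrix (Fin p) (Fin p) ℂ := C * Cᴴ with hQdef
  have hQpsd : Q.PosSemidef := Matrix.posSemidef_self_mul_conjTranspose C
  have hCC : Cᴴ * C = Wd U (fun i => τ i * (ν i * (ν i * τ i))) := by
    rw [hCH, hCdef, Matrix.mul_assoc, ← Matrix.mul_assoc Xᴴ X T, ← hSS, hSW, hTdef,
      Matrix.mul_assoc, Wd_mul hU2, Wd_mul hU2, Wd_mul hU2]
  have hQQ : Q * Q = Q := by
    have e1 : Q * Q = C * ((Cᴴ * C) * Cᴴ) := by
      rw [hQdef]; simp only [Matrix.mul_assoc]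
    rw [e1, hCC, hCH, ← Matrix.mul_assoc _ T Xᴴ, hTdef, Wd_mul hU2]
    have e2 : Wd U (fun i => τ i * (ν i * (ν i * τ i)) * τ i) = Wd U τ := by
      refine Wd_congr U fun i => ?_
      rcases eq_or_ne (ν i) 0 with h | h
      · simp [hτdef, h]
      · simp only [hτdef]; field_simp
    rw [e2, ← hTdef, ← hCH]
  have h1Qpsd : (1 - Q).PosSemidef := by
    have e : (1 - Q)ᴴ * (1 - Q) = 1 - Q := by
      rw [Matrix.conjTranspose_sub, Matrix.conjTranspose_one, hQpsd.1]
      have e2 : (1 - Q) * (1 - Q) = 1 - Q - Q + Q * Q := by noncomm_ring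
      rw [e2, hQQ]
      abel
    exact e ▸ Matrix.posSemidef_conjTranspose_mul_self (1 - Q)
  -- tr(A Q) ≤ tr A
  set R : Matrix (Fin p) (Fin p) ℂ := Wd (hApsd.1.eigenvectorUnitary : Matrix (Fin p) (Fin p) ℂ)
    (fun i => Real.sqrt (hApsd.1.eigenvalues i)) with hRdef
  have hRH : Rᴴ = R := Wd_herm _ _
  have hRR : R * R = A := psd_sqrt_sq hApsd
  have hAQ : (A * Q).trace.re ≤ A.trace.re := by
    have hps : (Rᴴ * (1 - Q) * R).PosSemidef := h1Qpsd.conjTranspose_mul_mul_same R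
    rw [hRH] at hps
    have h3 : (R * (1 - Q) * R).trace = A.trace - (A * Q).trace := by
      rw [Matrix.trace_mul_cycle, hRR, Matrix.mul_sub, Matrix.mul_one, Matrix.trace_sub]
    have h4 := psd_trace_re_nonneg hps
    rw [h3] at h4
    simp only [Complex.sub_re] at h4
    linarith
  have htrAC : (Cᴴ * (A * C)).trace = (A * Q).trace := by
    rw [← Matrix.mul_assoc, Matrix.trace_mul_cycle, hQdef, ← Matrix.mul_assoc,
      Matrix.trace_mul_comm, ← Matrix.mul_assoc]
  -- finish
  rw [htn]
  have h5 := htr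
  rw [hCXS, hXC, htrAC] at h5
  have h6 : (A * Q).trace.re ≤ A.trace.re := hAQ
  linarith
end
end

section
/- Let ρ_α be a density matrix on C^{d_α} for α = 1,…,N, and for each α let {A^{(α)}_{i}}_{i} be a finite family of Hermitian matrices on C^{d_α}. Consider the product observables M_{i₁…i_N} = A^{(1)}_{i₁} ⊗ ⋯ ⊗ A^{(N)}_{i_N}, indexed by tuples (i₁,…,i_N). Then Γ({M_{i₁…i_N}}, ρ₁ ⊗ ⋯ ⊗ ρ_N) = ⊗_{α=1}^N ( |a_α⟩⟨a_α| + Γ({A^{(α)}_{i}}, ρ_α) ) − ⊗_{α=1}^N |a_α⟩⟨a_α|, where a_α is the real vector with entries tr(A^{(α)}_{i} ρ_α), |a_α⟩⟨a_α| is the corresponding rank-one matrix, and ⊗ denotes the Kronecker product. -/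
open Matrix BigOperators
open scoped ComplexOrder

noncomputable section

/-- `N`-fold Kronecker (tensor) product of matrices. -/
def piKron {N : ℕ} {κ : Fin N → Type*} (M : ∀ α, Matrix (κ α) (κ α) ℂ) :
    Matrix (∀ α, κ α) (∀ α, κ α) ℂ :=
  Matrix.of fun i j => ∏ α, M α (i α) (j α)

lemma piKron_mul {N : ℕ} {κ : Fin N → Type*} [∀ α, Fintype (κ α)]
    [∀ α, DecidableEq (κ α)]
    (M P : ∀ α, Matrix (κ α) (κ α) ℂ) :
    piKron M * piKron P = piKron (fun α => M α * P α) := by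
  ext i j
  simp only [piKron, Matrix.mul_apply, Matrix.of_apply]
  rw [Finset.prod_univ_sum, Fintype.piFinset_univ]
  exact Finset.sum_congr rfl fun x _ => (Finset.prod_mul_distrib).symm

lemma piKron_trace {N : ℕ} {κ : Fin N → Type*} [∀ α, Fintype (κ α)]
    [∀ α, DecidableEq (κ α)]
    (M : ∀ α, Matrix (κ α) (κ α) ℂ) :
    (piKron M).trace = ∏ α, (M α).trace := by
  simp only [Matrix.trace, Matrix.diag, piKron, Matrix.of_apply]
  rw [Finset.prod_univ_sum, Fintype.piFinset_univ]

/-- Covariance matrix of product observables on an `N`-fold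
product state:
`Γ({⊗_α A^{(α)}_{i_α}}, ⊗_α ρ_α) = ⊗_α (|a_α⟩⟨a_α| + Γ(A^{(α)}, ρ_α)) −
⊗_α |a_α⟩⟨a_α|` with `(a_α)_i = tr(A^{(α)}_i ρ_α)`. -/
theorem stmt15 {N : ℕ} (d k : Fin N → ℕ)
    (ρ : ∀ α, Matrix (Fin (d α)) (Fin (d α)) ℂ)
    (hρ : ∀ α, IsDensity (ρ α))
    (A : ∀ α, Fin (k α) → Matrix (Fin (d α)) (Fin (d α)) ℂ)
    (hA : ∀ α i, (A α i).IsHermitian)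
    (a : ∀ α, Fin (k α) → ℂ)
    (ha : ∀ α i, a α i = (A α i * ρ α).trace) :
    covMat (fun idx : ∀ α, Fin (k α) => piKron (fun α => A α (idx α))) (piKron ρ) =
      piKron (fun α => vecMulVec (a α) (a α) + covMat (A α) (ρ α)) -
        piKron (fun α => vecMulVec (a α) (a α)) := by
  ext i j
  simp only [covMat, Matrix.of_apply, piKron_mul, piKron_trace]
  simp only [Matrix.sub_apply, piKron, Matrix.of_apply, Matrix.add_apply,
    Matrix.vecMulVec_apply]
  have h1 : ∀ α, a α (i α) * a α (j α) +
      ((A α (i α) * A α (j α) * ρ α).trace -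
        (A α (i α) * ρ α).trace * (A α (j α) * ρ α).trace) =
      (A α (i α) * A α (j α) * ρ α).trace := by
    intro α; rw [ha, ha]; ring
  simp only [ha]
  rw [← Finset.prod_mul_distrib]
  congr 1
  exact Finset.prod_congr rfl fun x _ => by ring
end
end
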